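/- arXiv:2105.04697 — 2 statements merged into one kernel-verified Lean document; each statement's English description precedes it below -/
import Mathlib

section
/- Let N ≥ 2 be an integer. For all v₁, v₂ ∈ [0,1] with v₁ ≥ v₂, the dual feasibility inequality (v₁^(N/(N−1)) + (N−1)·v₂^(N/(N−1)))/N ≤ v₁·v₁^(1/(N−1)) − ∫_{v₂}^{v₁} s^(1/(N−1)) ds holds, with equality for all such pairs. -/
/-! With `p = 1/(N-1)` the bid density exponent, `v₁ · v₁^p = v₁^(p+1)` and
`∫_{v₂}^{v₁} s^p ds = (v₁^(p+1) - v₂^(p+1))/(p+1)`, so the expected payment is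
`(p v₁^(p+1) + v₂^(p+1))/(p+1)`; since `p + 1 = N/(N-1)` this is exactly
`(v₁^(N/(N-1)) + (N-1) v₂^(N/(N-1)))/N`. -/

open MeasureTheory Set

lemma Real.self_mul_rpow_eq_rpow_add_one {p : ℝ} (hp : p + 1 ≠ 0) (x : ℝ) :
    x * x ^ p = x ^ (p + 1) := by
  rcases eq_or_ne x 0 with rfl | hx
  · rw [zero_mul, Real.zero_rpow hp]
  · rw [Real.rpow_add_one hx, mul_comm]

lemma self_mul_rpow_sub_integral_rpow {p : ℝ} (hp : -1 < p) (a b : ℝ) :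
    a * a ^ p - ∫ s in b..a, s ^ p = (p * a ^ (p + 1) + b ^ (p + 1)) / (p + 1) := by
  have hp₁ : p + 1 ≠ 0 := by linarith
  rw [integral_rpow (Or.inl hp), Real.self_mul_rpow_eq_rpow_add_one hp₁]
  field_simp
  ring

theorem stmt8 (N : ℕ) (hN : 2 ≤ N) :
    ∀ v₁ ∈ Icc (0:ℝ) 1, ∀ v₂ ∈ Icc (0:ℝ) 1, v₂ ≤ v₁ →
      (v₁ ^ ((N:ℝ)/((N:ℝ) - 1)) + ((N:ℝ) - 1) * v₂ ^ ((N:ℝ)/((N:ℝ) - 1))) / N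
          ≤ v₁ * v₁ ^ ((1:ℝ)/((N:ℝ) - 1)) - ∫ s in v₂..v₁, s ^ ((1:ℝ)/((N:ℝ) - 1))
      ∧ (v₁ ^ ((N:ℝ)/((N:ℝ) - 1)) + ((N:ℝ) - 1) * v₂ ^ ((N:ℝ)/((N:ℝ) - 1))) / N
          = v₁ * v₁ ^ ((1:ℝ)/((N:ℝ) - 1)) - ∫ s in v₂..v₁, s ^ ((1:ℝ)/((N:ℝ) - 1)) := by
  intro v₁ _ v₂ _ _
  have hN₁ : (0:ℝ) < (N:ℝ) - 1 := by
    have : (2:ℝ) ≤ N := by exact_mod_cast hN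
    linarith
  have hp : -1 < (1:ℝ) / ((N:ℝ) - 1) := by linarith [one_div_pos.mpr hN₁]
  have hexp : (1:ℝ) / ((N:ℝ) - 1) + 1 = (N:ℝ) / ((N:ℝ) - 1) := by
    field_simp
    ring
  have payment : (v₁ ^ ((N:ℝ)/((N:ℝ) - 1)) + ((N:ℝ) - 1) * v₂ ^ ((N:ℝ)/((N:ℝ) - 1))) / N
      = v₁ * v₁ ^ ((1:ℝ)/((N:ℝ) - 1)) - ∫ s in v₂..v₁, s ^ ((1:ℝ)/((N:ℝ) - 1)) := by
    rw [self_mul_rpow_sub_integral_rpow hp, hexp]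
    field_simp
  exact ⟨payment.le, payment⟩
end

section
/- Let F : [0,1] → [0,1] be a cumulative distribution function with F(1) = 1 and suppose the revenue function R(x) = x·(1−F(x)) is concave on [0,1]. Then 2·∫₀¹ x·(1−F(x)) dx ≥ max_{x ∈ [0,1]} x·(1−F(x)). -/
open MeasureTheory Set

/-!
A concave function on `[a, b]` lies above its chord, so on each of `[a, x]` and `[x, b]` its
integral dominates the trapezoid under that chord. When `f a, f b ≥ 0` the two trapezoids contain
the triangle with base `[a, b]` and apex `(x, f x)`, whose area is `(b - a) f(x) / 2`.
-/

theorem integral_linear_interpolation (a b c d : ℝ) :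
    ∫ t in a..b, ((b - t) * c + (t - a) * d) = (b - a) ^ 2 * (c + d) / 2 := by
  rw [intervalIntegral.integral_add (by apply Continuous.intervalIntegrable; fun_prop)
    (by apply Continuous.intervalIntegrable; fun_prop)]
  simp only [intervalIntegral.integral_mul_const]
  rw [intervalIntegral.integral_comp_sub_left (fun x => x),
    intervalIntegral.integral_comp_sub_right (fun x => x)]
  simp only [integral_id]
  ring

namespace ConcaveOn

variable {f : ℝ → ℝ} {a b : ℝ}

theorem chord_le (hf : ConcaveOn ℝ (Icc a b) f) {t : ℝ} (ht : t ∈ Icc a b) :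
    (b - t) * f a + (t - a) * f b ≤ (b - a) * f t := by
  rcases ht.1.eq_or_lt with rfl | hat
  · simp
  have hab : 0 < b - a := by linarith [ht.2]
  have key := hf.2 (left_mem_Icc.2 (hat.le.trans ht.2)) (right_mem_Icc.2 (hat.le.trans ht.2))
    (div_nonneg (sub_nonneg.2 ht.2) hab.le) (div_nonneg (sub_nonneg.2 ht.1) hab.le)
    (by field_simp; ring)
  have hcomb : ((b - t) / (b - a)) • a + ((t - a) / (b - a)) • b = t := by
    simp only [smul_eq_mul]; field_simp; ring
  rw [hcomb, smul_eq_mul, smul_eq_mul] at key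
  calc (b - t) * f a + (t - a) * f b
      = (b - a) * ((b - t) / (b - a) * f a + (t - a) / (b - a) * f b) := by field_simp
    _ ≤ (b - a) * f t := by gcongr

theorem trapezoid_le_integral (hf : ConcaveOn ℝ (Icc a b) f) (hab : a ≤ b)
    (hint : IntervalIntegrable f volume a b) :
    (b - a) * (f a + f b) / 2 ≤ ∫ t in a..b, f t := by
  rcases hab.eq_or_lt with rfl | hab
  · simp
  have hchord : ∫ t in a..b, ((b - t) * f a + (t - a) * f b) ≤ ∫ t in a..b, (b - a) * f t :=
    intervalIntegral.integral_mono_on hab.le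
      (by apply Continuous.intervalIntegrable; fun_prop) (hint.const_mul _)
      fun t ht => hf.chord_le ht
  rw [integral_linear_interpolation, intervalIntegral.integral_const_mul] at hchord
  have : 0 < b - a := sub_pos.2 hab
  nlinarith

theorem sub_mul_le_two_mul_integral (hf : ConcaveOn ℝ (Icc a b) f)
    (hint : IntervalIntegrable f volume a b) (ha : 0 ≤ f a) (hb : 0 ≤ f b) {x : ℝ}
    (hx : x ∈ Icc a b) : (b - a) * f x ≤ 2 * ∫ t in a..b, f t := by
  have hx' : x ∈ uIcc a b := mem_uIcc_of_le hx.1 hx.2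
  have hint₁ := hint.mono_set (uIcc_subset_uIcc left_mem_uIcc hx')
  have hint₂ := hint.mono_set (uIcc_subset_uIcc hx' right_mem_uIcc)
  have hleft := (hf.subset (Icc_subset_Icc_right hx.2) (convex_Icc _ _)).trapezoid_le_integral
    hx.1 hint₁
  have hright := (hf.subset (Icc_subset_Icc_left hx.1) (convex_Icc _ _)).trapezoid_le_integral
    hx.2 hint₂
  rw [← intervalIntegral.integral_add_adjacent_intervals hint₁ hint₂]
  nlinarith [mul_nonneg (sub_nonneg.2 hx.1) ha, mul_nonneg (sub_nonneg.2 hx.2) hb]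

end ConcaveOn

theorem stmt10_general (F : ℝ → ℝ)
    (hmono : MonotoneOn F (Icc (0:ℝ) 1))
    (hF1 : F 1 = 1)
    (hconc : ConcaveOn ℝ (Icc (0:ℝ) 1) (fun x => x * (1 - F x))) :
    ∀ x ∈ Icc (0:ℝ) 1, x * (1 - F x) ≤ 2 * ∫ y in (0:ℝ)..1, y * (1 - F y) := by
  intro x hx
  have hsurvival : IntervalIntegrable (fun y => 1 - F y) volume 0 1 :=
    intervalIntegrable_const.sub
      (MonotoneOn.intervalIntegrable (by rwa [uIcc_of_le zero_le_one]))
  have hint : IntervalIntegrable (fun y => y * (1 - F y)) volume 0 1 :=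
    hsurvival.continuousOn_mul continuousOn_id
  simpa using hconc.sub_mul_le_two_mul_integral hint (by simp) (by simp [hF1]) hx

theorem stmt10 (F : ℝ → ℝ)
    (hmono : MonotoneOn F (Icc (0:ℝ) 1))
    (hrange : ∀ x ∈ Icc (0:ℝ) 1, F x ∈ Icc (0:ℝ) 1)
    (hF1 : F 1 = 1)
    (hconc : ConcaveOn ℝ (Icc (0:ℝ) 1) (fun x => x * (1 - F x))) :
    ∀ x ∈ Icc (0:ℝ) 1, x * (1 - F x) ≤ 2 * ∫ y in (0:ℝ)..1, y * (1 - F y) :=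
  stmt10_general F hmono hF1 hconc
end
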